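/- Let β > 1 and suppose the (-β)-expansion of l_β = -β/(β+1) is purely periodic with odd period 2n-1, d(l_β,-β) = (d_1...d_{2n-1})^∞. If x_1...x_k is any word in the language L_β of the (-β)-shift such that d_1...d_{2n-1} x_1...x_k ∈ L_β, then x_1...x_k = d_1...d_k. Consequently the (-β)-shift is not transitive. -/

import Mathlib

/-- The `(-β)`-transformation. -/
noncomputable def Tm (β x : ℝ) : ℝ := -β * x - ⌊-β * x + β / (β + 1)⌋

/-- The digits of the `(-β)`-expansion of `x`, 0-indexed: `dig β x n = x_{n+1}`. -/
noncomputable def dig (β x : ℝ) (n : ℕ) : ℤ := ⌊-β * (Tm β)^[n] x + β / (β + 1)⌋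

/-- Alternating lexicographic (non-strict) order on one-sided sequences. -/
def seqAltLE (x y : ℕ → ℤ) : Prop :=
  x = y ∨ ∃ k : ℕ, (∀ i < k, x i = y i) ∧ (-1 : ℤ) ^ (k + 1) * (x k - y k) < 0

/-- The one-sided `(-β)`-shift determined by the lower bound `D = (d_i)_{i≥1}`
and the upper bound `Dstar = (d*_{i-1})_{i≥1}`. -/
def negShift (D Dstar : ℕ → ℤ) : Set (ℕ → ℤ) :=
  { x | ∀ n : ℕ, seqAltLE D (fun i => x (i + n)) ∧ seqAltLE (fun i => x (i + n)) Dstar }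

/-- The language of a one-sided symbolic system: all finite factors. -/
def lang (S : Set (ℕ → ℤ)) : Set (List ℤ) :=
  { w | ∃ x ∈ S, ∃ k : ℕ, w = (List.range w.length).map fun i => x (k + i) }

section aux
variable {β : ℝ} (hβ : 1 < β)

lemma Tm_iter_succ (x : ℝ) (k : ℕ) :
    (Tm β)^[k+1] x = -β * (Tm β)^[k] x - dig β x k := by
  rw [Function.iterate_succ_apply']; rfl

lemma dig_shift (x : ℝ) (m k : ℕ) : dig β ((Tm β)^[m] x) k = dig β x (k + m) := by
  unfold dig
  rw [← Function.iterate_add_apply]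

include hβ

lemma Tm_mem (x : ℝ) : -β/(β+1) ≤ Tm β x ∧ Tm β x < -β/(β+1) + 1 := by
  have hb1 : (0:ℝ) < β + 1 := by linarith
  have h1 : Tm β x = -β/(β+1) + Int.fract (-β * x + β/(β+1)) := by
    unfold Tm Int.fract
    have : β / (β+1) = -(-β/(β+1)) := by ring
    push_cast
    ring
  constructor
  · nlinarith [Int.fract_nonneg (-β * x + β/(β+1))]
  · nlinarith [Int.fract_lt_one (-β * x + β/(β+1))]

lemma dig_nonneg0 (x : ℝ) (hx : x < -β/(β+1) + 1) : 0 ≤ dig β x 0 := by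
  have hb1 : (0:ℝ) < β + 1 := by linarith
  have hb0 : (0:ℝ) < β := by linarith
  have : (0:ℝ) ≤ -β * x + β/(β+1) := by
    have h1 : -β * x > -β * (-β/(β+1) + 1) := by nlinarith
    have h2 : -β * (-β/(β+1) + 1) + β/(β+1) = 0 := by field_simp; ring
    nlinarith
  unfold dig
  simpa using Int.floor_nonneg.2 this

lemma dig_anti0 {u v : ℝ} (huv : u ≤ v) : dig β v 0 ≤ dig β u 0 := by
  have hb0 : (0:ℝ) < β := by linarith
  unfold dig
  simp only [Function.iterate_zero_apply]
  apply Int.floor_le_floor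
  nlinarith

lemma diff_pow {a b : ℝ} (N : ℕ) (h : ∀ i < N, dig β a i = dig β b i) :
    (Tm β)^[N] a - (Tm β)^[N] b = (-β)^N * (a - b) := by
  induction N with
  | zero => simp
  | succ N IH =>
    have hIH := IH (fun i hi => h i (by omega))
    have hd := h N (by omega)
    rw [Tm_iter_succ, Tm_iter_succ, hd]
    rw [pow_succ]
    nlinarith [hIH]

lemma eq_of_dig_eq {a b : ℝ} (h : ∀ i, dig β a i = dig β b i) : a = b := by
  by_contra hne
  have hb0 : (0:ℝ) < β := by linarith
  have hε : 0 < |a - b| := abs_pos.2 (sub_ne_zero.2 hne)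
  obtain ⟨N, hN⟩ := pow_unbounded_of_one_lt (1 / |a - b|) hβ
  have hdiff : (Tm β)^[N+1] a - (Tm β)^[N+1] b = (-β)^(N+1) * (a - b) :=
    diff_pow hβ (N+1) (fun i _ => h i)
  have h1 : |(Tm β)^[N+1] a - (Tm β)^[N+1] b| < 1 := by
    have ha := Tm_mem hβ ((Tm β)^[N] a)
    have hb := Tm_mem hβ ((Tm β)^[N] b)
    simp only [Function.iterate_succ_apply']
    rw [abs_sub_lt_iff]
    constructor <;> linarith [ha.1, ha.2, hb.1, hb.2]
  rw [hdiff, abs_mul, abs_pow, abs_neg, abs_of_pos hb0] at h1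
  have h2 : β ^ N ≤ β ^ (N+1) := pow_le_pow_right₀ (by linarith) (by omega)
  have h3 : 1 / |a - b| < β ^ (N+1) := lt_of_lt_of_le hN h2
  have : 1 < β ^ (N+1) * |a - b| := by
    rw [div_lt_iff₀ hε] at h3
    linarith
  linarith

lemma dig_mono {a b : ℝ} (hab : a ≤ b) : seqAltLE (dig β a) (dig β b) := by
  rcases eq_or_lt_of_le hab with rfl | hlt
  · exact Or.inl rfl
  by_cases hall : ∀ i, dig β a i = dig β b i
  · exact absurd (eq_of_dig_eq hβ hall) (ne_of_lt hlt)
  push_neg at hall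
  have hex : ∃ i, dig β a i ≠ dig β b i := hall
  classical
  refine Or.inr ⟨Nat.find hex, fun i hi => not_not.1 (Nat.find_min hex hi), ?_⟩
  set k := Nat.find hex with hk
  have hne : dig β a k ≠ dig β b k := Nat.find_spec hex
  have hagree : ∀ i < k, dig β a i = dig β b i := fun i hi => not_not.1 (Nat.find_min hex hi)
  have hdp : (Tm β)^[k] a - (Tm β)^[k] b = (-β)^k * (a - b) := diff_pow hβ k hagree
  have hb0 : (0:ℝ) < β := by linarith
  have hka : dig β a k = dig β ((Tm β)^[k] a) 0 := by rw [dig_shift]; simp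
  have hkb : dig β b k = dig β ((Tm β)^[k] b) 0 := by rw [dig_shift]; simp
  rcases Nat.even_or_odd k with he | ho
  · -- k even: T^k a < T^k b, dig a k > dig b k
    have hp : (-β)^k = β^k := by
      rw [neg_pow, Even.neg_one_pow he, one_mul]
    have hTlt : (Tm β)^[k] a < (Tm β)^[k] b := by
      have : (0:ℝ) < β ^ k := pow_pos hb0 k
      nlinarith [hdp]
    have hle : dig β b k ≤ dig β a k := by
      rw [hka, hkb]; exact dig_anti0 hβ hTlt.le
    have hgt : dig β b k < dig β a k := lt_of_le_of_ne hle (fun h => hne h.symm)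
    have hsgn : (-1:ℤ)^(k+1) = -1 := Odd.neg_one_pow (Even.add_one he)
    rw [hsgn]
    linarith
  · -- k odd: T^k a > T^k b, dig a k < dig b k
    have hp : (-β)^k = -β^k := by
      rw [neg_pow, Odd.neg_one_pow ho, neg_one_mul]
    have hTlt : (Tm β)^[k] b < (Tm β)^[k] a := by
      have : (0:ℝ) < β ^ k := pow_pos hb0 k
      nlinarith [hdp]
    have hle : dig β a k ≤ dig β b k := by
      rw [hka, hkb]; exact dig_anti0 hβ hTlt.le
    have hgt : dig β a k < dig β b k := lt_of_le_of_ne hle hne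
    have hsgn : (-1:ℤ)^(k+1) = 1 := Even.neg_one_pow (Odd.add_one ho)
    rw [hsgn]
    linarith
end aux

theorem stmt15 (β : ℝ) (hβ : 1 < β) (n : ℕ) (hn : 1 ≤ n)
    (d dstar : ℕ → ℤ)
    (hd : ∀ i, 1 ≤ i → d i = dig β (-β / (β + 1)) (i - 1))
    -- the expansion of `l_β` is purely periodic with odd period `2n-1`:
    (hper : ∀ i, 1 ≤ i → d (i + (2 * n - 1)) = d i)
    (hdstar0 : dstar 0 = 0)
    -- `(d*_{i})_{i≥1}` is the corrected sequence, periodic with period `2n`: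
    (hdstar : ∀ i, 1 ≤ i → dstar i =
      if i % (2 * n) = 0 then 0
      else if i % (2 * n) = 2 * n - 1 then d (2 * n - 1) - 1
      else d (i % (2 * n)))
    (L : Set (List ℤ))
    (hL : L = lang (negShift (fun i => d (i + 1)) dstar)) :
    (∀ x : List ℤ, x ∈ L →
      (List.ofFn fun i : Fin (2 * n - 1) => d (i + 1)) ++ x ∈ L →
      x = List.ofFn fun i : Fin x.length => d (i + 1)) ∧
    ¬∀ v ∈ L, ∀ w ∈ L, ∃ u : List ℤ, v ++ u ++ w ∈ L := by

  subst hL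
  classical
  set l : ℝ := -β / (β + 1) with hl
  have hb0 : (0:ℝ) < β := by linarith
  have hb1 : (0:ℝ) < β + 1 := by linarith
  have h2n : 0 < 2 * n := by omega
  have hdig : ∀ i, d (i + 1) = dig β l i := by
    intro i
    have h1 := hd (i + 1) (by omega)
    simpa using h1
  have hperiodic : ∀ j, dig β l (j + (2 * n - 1)) = dig β l j := by
    intro j
    have h1 := hper (j + 1) (by omega)
    have e1 : (j + 1) + (2 * n - 1) = (j + (2 * n - 1)) + 1 := by omega
    rw [e1, hdig, hdig] at h1
    exact h1
  have hTp : (Tm β)^[2 * n - 1] l = l := by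
    apply eq_of_dig_eq hβ
    intro i
    rw [dig_shift]
    exact hperiodic i
  have hkey : -β * (Tm β)^[2 * n - 2] l = l + (d (2 * n - 1) : ℝ) := by
    have h1 : (Tm β)^[(2 * n - 2) + 1] l = -β * (Tm β)^[2 * n - 2] l - dig β l (2 * n - 2) :=
      Tm_iter_succ l (2 * n - 2)
    have e1 : (2 * n - 2) + 1 = 2 * n - 1 := by omega
    rw [e1] at h1
    rw [hTp] at h1
    rw [← hdig (2 * n - 2), e1] at h1
    linarith
  -- Lemma A: upper bound for digit sequences of points in [l, l+1)
  have hA : ∀ x : ℝ, x < l + 1 → seqAltLE (dig β x) dstar := by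
    intro x hx2
    have hTlt : ∀ k, (Tm β)^[k] x < l + 1 := by
      intro k
      cases k with
      | zero => simpa using hx2
      | succ k => rw [Function.iterate_succ_apply']; exact (Tm_mem hβ _).2
    have hInv : ∀ k, (∀ i < k, dig β x i = dstar i) → ∀ q m, k = q * (2 * n) + (m + 1) →
        m + 1 < 2 * n → 0 < (-1:ℝ) ^ m * ((Tm β)^[k] x - (Tm β)^[m] l) := by
      intro k
      induction k with
      | zero => intro _ q m hk _; omega
      | succ k IH =>
        intro hag q m hk hm
        have hagk : ∀ i < k, dig β x i = dstar i := fun i hi => hag i (by omega)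
        have hdk : dig β x k = dstar k := hag k (by omega)
        cases m with
        | zero =>
          have hkq : k = q * (2 * n) := by omega
          have hds : dstar k = 0 := by
            rcases Nat.eq_zero_or_pos k with h0 | h0
            · rw [h0]; exact hdstar0
            · rw [hdstar k h0]
              have hm0 : k % (2 * n) = 0 := by rw [hkq]; exact Nat.mul_mod_left q (2 * n)
              simp [hm0]
          have hstep : (Tm β)^[k + 1] x = -β * (Tm β)^[k] x := by
            rw [Tm_iter_succ, hdk, hds]
            norm_num
          simp only [pow_zero, one_mul, Function.iterate_zero_apply]
          have h1 : (Tm β)^[k] x < l + 1 := hTlt k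
          have h2 : -β * (l + 1) = l := by rw [hl]; field_simp; ring
          rw [hstep]
          nlinarith
        | succ m' =>
          have hk' : k = q * (2 * n) + (m' + 1) := by omega
          have hm' : m' + 1 < 2 * n := by omega
          have hIH := IH hagk q m' hk' hm'
          have hds : dstar k = d (m' + 1) := by
            rw [hdstar k (by omega)]
            have hmod : k % (2 * n) = m' + 1 := by
              rw [hk', Nat.mul_comm, Nat.mul_add_mod, Nat.mod_eq_of_lt hm']
            rw [hmod]
            simp [show ¬(m' + 1 = 0) by omega, show ¬(m' + 1 = 2 * n - 1) by omega]
          have hstep : (Tm β)^[k + 1] x - (Tm β)^[m' + 1] l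
              = -β * ((Tm β)^[k] x - (Tm β)^[m'] l) := by
            rw [Tm_iter_succ, Tm_iter_succ, hdk, hds, ← hdig m']
            push_cast
            ring
          have hre : (-1:ℝ) ^ (m' + 1) * ((Tm β)^[k + 1] x - (Tm β)^[m' + 1] l)
              = β * ((-1:ℝ) ^ m' * ((Tm β)^[k] x - (Tm β)^[m'] l)) := by
            rw [hstep, pow_succ]
            ring
          rw [hre]
          exact mul_pos hb0 hIH
    by_cases hall : ∀ i, dig β x i = dstar i
    · exact Or.inl (funext hall)
    push_neg at hall
    refine Or.inr ⟨Nat.find hall, fun i hi => not_not.1 (Nat.find_min hall hi), ?_⟩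
    set k := Nat.find hall with hkdef
    have hne : dig β x k ≠ dstar k := Nat.find_spec hall
    have hagree : ∀ i < k, dig β x i = dstar i := fun i hi => not_not.1 (Nat.find_min hall hi)
    have hdm := Nat.div_add_mod k (2 * n)
    have hmlt : k % (2 * n) < 2 * n := Nat.mod_lt _ h2n
    have hk2 : k % 2 = (k % (2 * n)) % 2 := (Nat.mod_mod_of_dvd k ⟨n, by ring⟩).symm
    rcases Nat.eq_zero_or_pos (k % (2 * n)) with hm0 | hmpos
    · have hds : dstar k = 0 := by
        rcases Nat.eq_zero_or_pos k with h0 | h0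
        · rw [h0]; exact hdstar0
        · rw [hdstar k h0, hm0]; simp
      have hnn : 0 ≤ dig β x k := by
        have he : dig β x k = dig β ((Tm β)^[k] x) 0 := by rw [dig_shift, Nat.zero_add]
        rw [he]
        exact dig_nonneg0 hβ _ (hTlt k)
      have hke : k % 2 = 0 := by rw [hk2, hm0]
      have hsgn : (-1:ℤ) ^ (k + 1) = -1 := Odd.neg_one_pow (Nat.odd_iff.2 (by omega))
      rw [hds, hsgn]
      have hpos : 0 < dig β x k := lt_of_le_of_ne hnn (fun h => hne (hds ▸ h.symm))
      linarith
    · obtain ⟨m₀, hm₀⟩ : ∃ m₀, k % (2 * n) = m₀ + 1 := ⟨k % (2 * n) - 1, by omega⟩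
      have hkdecomp : k = (k / (2 * n)) * (2 * n) + (m₀ + 1) := by
        rw [Nat.mul_comm (k / (2 * n)) (2 * n)]
        omega
      have hInvk := hInv k hagree (k / (2 * n)) m₀ hkdecomp (by omega)
      have hkm : k % 2 = (m₀ + 1) % 2 := by rw [hk2, hm₀]
      have hxk : dig β x k = dig β ((Tm β)^[k] x) 0 := by rw [dig_shift, Nat.zero_add]
      have hlm : d (m₀ + 1) = dig β ((Tm β)^[m₀] l) 0 := by
        rw [dig_shift, Nat.zero_add]
        exact hdig m₀
      rcases Nat.lt_or_ge (m₀ + 1) (2 * n - 1) with hcase | hcase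
      · have hds : dstar k = d (m₀ + 1) := by
          rw [hdstar k (by omega), hm₀]
          simp [show ¬(m₀ + 1 = 0) by omega, show ¬(m₀ + 1 = 2 * n - 1) by omega]
        rcases Nat.even_or_odd m₀ with he | ho
        · have h1 : (Tm β)^[m₀] l < (Tm β)^[k] x := by
            rw [Even.neg_one_pow he, one_mul] at hInvk
            linarith
          have hle : dig β x k ≤ d (m₀ + 1) := by
            rw [hxk, hlm]
            exact dig_anti0 hβ h1.le
          have hlt : dig β x k < dstar k := lt_of_le_of_ne (hds ▸ hle) hne
          have hsgn : (-1:ℤ) ^ (k + 1) = 1 := by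
            apply Even.neg_one_pow
            have hme : m₀ % 2 = 0 := Nat.even_iff.1 he
            exact Nat.even_iff.2 (by omega)
          rw [hsgn]
          linarith
        · have h1 : (Tm β)^[k] x < (Tm β)^[m₀] l := by
            rw [Odd.neg_one_pow ho, neg_one_mul] at hInvk
            linarith
          have hle : d (m₀ + 1) ≤ dig β x k := by
            rw [hxk, hlm]
            exact dig_anti0 hβ h1.le
          have hlt : dstar k < dig β x k := lt_of_le_of_ne (hds ▸ hle) (fun h => hne h.symm)
          have hsgn : (-1:ℤ) ^ (k + 1) = -1 := by
            apply Odd.neg_one_pow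
            have hme : m₀ % 2 = 1 := Nat.odd_iff.1 ho
            exact Nat.odd_iff.2 (by omega)
          rw [hsgn]
          linarith
      · have hmeq : m₀ + 1 = 2 * n - 1 := by omega
        have hds : dstar k = d (2 * n - 1) - 1 := by
          rw [hdstar k (by omega), hm₀, hmeq]
          simp [show ¬(2 * n - 1 = 0) by omega]
        have hm₀e : Even m₀ := Nat.even_iff.2 (by omega)
        have h1 : (Tm β)^[m₀] l < (Tm β)^[k] x := by
          rw [Even.neg_one_pow hm₀e, one_mul] at hInvk
          linarith
        have harglt : -β * (Tm β)^[k] x + β / (β + 1) < (d (2 * n - 1) : ℝ) := by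
          have e : m₀ = 2 * n - 2 := by omega
          have hk2' : -β * (Tm β)^[m₀] l = l + (d (2 * n - 1) : ℝ) := by rw [e]; exact hkey
          have hc : β / (β + 1) = -l := by rw [hl]; ring
          nlinarith [h1]
        have hlt' : dig β x k < d (2 * n - 1) := by
          have he : dig β x k = ⌊-β * (Tm β)^[k] x + β / (β + 1)⌋ := rfl
          rw [he]
          exact Int.floor_lt.2 (by exact_mod_cast harglt)
        have hlt : dig β x k < dstar k := by
          have hle : dig β x k ≤ dstar k := by omega
          exact lt_of_le_of_ne hle hne
        have hsgn : (-1:ℤ) ^ (k + 1) = 1 := by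
          apply Even.neg_one_pow
          have hme : m₀ % 2 = 0 := Nat.even_iff.1 hm₀e
          exact Nat.even_iff.2 (by omega)
        rw [hsgn]
        linarith
  have hDfun : (fun i : ℕ => d (i + 1)) = dig β l := funext hdig
  have hB : ∀ x : ℝ, l ≤ x → x < l + 1 → dig β x ∈ negShift (fun i => d (i + 1)) dstar := by
    intro x hx1 hx2
    simp only [negShift, Set.mem_setOf_eq]
    intro m
    have hTm1 : l ≤ (Tm β)^[m] x := by
      cases m with
      | zero => simpa using hx1
      | succ m => rw [Function.iterate_succ_apply']; exact (Tm_mem hβ _).1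
    have hTm2 : (Tm β)^[m] x < l + 1 := by
      cases m with
      | zero => simpa using hx2
      | succ m => rw [Function.iterate_succ_apply']; exact (Tm_mem hβ _).2
    have hshift : (fun i => dig β x (i + m)) = dig β ((Tm β)^[m] x) := by
      funext i
      rw [dig_shift]
    constructor
    · rw [hDfun, hshift]
      exact dig_mono hβ hTm1
    · rw [hshift]
      exact hA _ hTm2
  -- part 1
  have main : ∀ x : List ℤ,
      x ∈ lang (negShift (fun i => d (i + 1)) dstar) →
      (List.ofFn fun i : Fin (2 * n - 1) => d (↑i + 1)) ++ x ∈ lang (negShift (fun i => d (i + 1)) dstar) →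
      x = List.ofFn fun i : Fin x.length => d (↑i + 1) := by
    intro x hx hpx
    obtain ⟨y, hy, k0, hxe⟩ := hx
    obtain ⟨y', hy', k1, hwe⟩ := hpx
    have hxg : ∀ i (hi : i < x.length), x[i] = y (k0 + i) := fun i hi => by
      have h1 := List.getElem_of_eq hxe hi
      simpa using h1
    have hWlen : ((List.ofFn fun i : Fin (2 * n - 1) => d (↑i + 1)) ++ x).length
        = (2 * n - 1) + x.length := by simp
    have hWg : ∀ i (hi : i < (2 * n - 1) + x.length),
        y' (k1 + i) = ((List.ofFn fun i : Fin (2 * n - 1) => d (↑i + 1)) ++ x)[i]'(by omega) := by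
      intro i hi
      have h1 := List.getElem_of_eq hwe (by omega : i < ((List.ofFn fun i : Fin (2 * n - 1) => d (↑i + 1)) ++ x).length)
      simp only [List.getElem_map, List.getElem_range] at h1
      exact h1.symm
    have hW1 : ∀ i, i < 2 * n - 1 → y' (k1 + i) = d (i + 1) := by
      intro i hi
      rw [hWg i (by omega)]
      rw [List.getElem_append_left (by simpa using hi)]
      simp
    have hW2 : ∀ i, i < x.length → y' (k1 + ((2 * n - 1) + i)) = y (k0 + i) := by
      intro i hi
      rw [hWg ((2 * n - 1) + i) (by omega)]
      rw [List.getElem_append_right (by simp)]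
      have e : (2 * n - 1) + i - (List.ofFn fun i : Fin (2 * n - 1) => d (↑i + 1)).length = i := by
        simp
      simp only [e]
      exact hxg i hi
    -- the key inductive claim
    have key : ∀ i, i < x.length → y (k0 + i) = d (i + 1) := by
      intro i
      induction i using Nat.strong_induction_on with
      | _ i IH =>
        intro hi
        rcases (hy k0).1 with heq | ⟨K, hKlt, hKs⟩
        · have h0 : d (i + 1) = y (i + k0) := congrFun heq i
          rw [Nat.add_comm k0 i]
          exact h0.symm
        · have hKs' : (-1 : ℤ) ^ (K + 1) * (d (K + 1) - y (K + k0)) < 0 := hKs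
          rcases lt_trichotomy K i with hKi | hKeq | hiK
          · exfalso
            have hyK : y (K + k0) = d (K + 1) := by
              rw [Nat.add_comm]
              exact IH K hKi (by omega)
            rw [hyK] at hKs'
            simp at hKs'
          · subst hKeq
            have hA1 : (-1 : ℤ) ^ (K + 1) * (d (K + 1) - y (k0 + K)) < 0 := by
              rw [Nat.add_comm k0 K]
              exact hKs'
            rcases (hy' k1).1 with heq' | ⟨K', hK'lt, hK's⟩
            · have h1 : d ((2 * n - 1) + K + 1) = y' (((2 * n - 1) + K) + k1) :=
                congrFun heq' ((2 * n - 1) + K)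
              rw [Nat.add_comm ((2 * n - 1) + K) k1] at h1
              rw [hW2 K hi] at h1
              have e2 : (2 * n - 1) + K + 1 = (K + 1) + (2 * n - 1) := by omega
              rw [e2, hper (K + 1) (by omega)] at h1
              exact h1.symm
            · have hK's' : (-1 : ℤ) ^ (K' + 1) * (d (K' + 1) - y' (K' + k1)) < 0 := hK's
              rcases lt_trichotomy K' ((2 * n - 1) + K) with h1 | hK'eq | h3
              · exfalso
                have hzero : d (K' + 1) = y' (K' + k1) := by
                  rw [Nat.add_comm K' k1]
                  rcases Nat.lt_or_ge K' (2 * n - 1) with hK'p | hK'p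
                  · rw [hW1 K' hK'p]
                  · obtain ⟨j, rfl⟩ : ∃ j, K' = (2 * n - 1) + j := ⟨K' - (2 * n - 1), by omega⟩
                    have hj : j < K := by omega
                    rw [hW2 j (by omega)]
                    rw [IH j hj (by omega)]
                    have e2 : (2 * n - 1) + j + 1 = (j + 1) + (2 * n - 1) := by omega
                    rw [e2, hper (j + 1) (by omega)]
                rw [← hzero] at hK's'
                simp at hK's'
              · exfalso
                subst hK'eq
                have hB1 : (-1 : ℤ) ^ ((2 * n - 1) + K + 1) * (d (K + 1) - y (k0 + K)) < 0 := by
                  have h2 := hK's'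
                  rw [Nat.add_comm ((2 * n - 1) + K) k1, hW2 K hi] at h2
                  have e2 : (2 * n - 1) + K + 1 = (K + 1) + (2 * n - 1) := by omega
                  rw [e2, hper (K + 1) (by omega), ← e2] at h2
                  exact h2
                have e3 : (2 * n - 1) + K + 1 = 2 * n + K := by omega
                rw [e3] at hB1
                have e4 : (-1 : ℤ) ^ (2 * n + K) = (-1 : ℤ) ^ K := by
                  rw [pow_add]
                  rw [Even.neg_one_pow (⟨n, by ring⟩ : Even (2 * n)), one_mul]
                have e5 : (-1 : ℤ) ^ (K + 1) = -(-1 : ℤ) ^ K := by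
                  rw [pow_succ]; ring
                rw [e4] at hB1
                rw [e5] at hA1
                nlinarith [hA1, hB1]
              · have h4 : d (((2 * n - 1) + K) + 1) = y' (((2 * n - 1) + K) + k1) :=
                  hK'lt ((2 * n - 1) + K) h3
                rw [Nat.add_comm ((2 * n - 1) + K) k1, hW2 K hi] at h4
                have e2 : (2 * n - 1) + K + 1 = (K + 1) + (2 * n - 1) := by omega
                rw [e2, hper (K + 1) (by omega)] at h4
                exact h4.symm
          · have h4 : d (i + 1) = y (i + k0) := hKlt i hiK
            rw [Nat.add_comm i k0] at h4
            exact h4.symm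
    apply List.ext_getElem (by simp)
    intro i h1 h2
    rw [hxg i h1]
    simp only [List.getElem_ofFn]
    exact key i h1
  refine ⟨main, ?_⟩
  -- part 2: not transitive
  intro htrans
  -- v : the periodic prefix
  have hl1 : (0:ℝ) < l + 1 := by
    have h0 : -β / (β + 1) + 1 = 1 / (β + 1) := by field_simp; ring
    rw [hl, h0]
    positivity
  have hDmem : (fun i : ℕ => d (i + 1)) ∈ negShift (fun i => d (i + 1)) dstar := by
    have h1 := hB l le_rfl (by linarith)
    rwa [← hDfun] at h1
  have hv : (List.ofFn fun i : Fin (2 * n - 1) => d (↑i + 1)) ∈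
      lang (negShift (fun i => d (i + 1)) dstar) := by
    refine ⟨fun i => d (i + 1), hDmem, 0, ?_⟩
    apply List.ext_getElem (by simp)
    intro i h1 h2
    simp
  -- w : a block of zeros
  have hfl : ⌊-β * 0 + β / (β + 1)⌋ = 0 := by
    have h1 : -β * 0 + β / (β + 1) = β / (β + 1) := by ring
    rw [h1, Int.floor_eq_zero_iff]
    constructor
    · exact div_nonneg hb0.le hb1.le
    · rw [div_lt_one hb1]
      linarith
  have hzero : ∀ i, dig β (0:ℝ) i = 0 := by
    have hT0 : ∀ k, (Tm β)^[k] (0:ℝ) = 0 := by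
      intro k
      induction k with
      | zero => simp
      | succ k IH =>
        rw [Function.iterate_succ_apply', IH]
        unfold Tm
        rw [hfl]
        simp
    intro i
    unfold dig
    rw [hT0 i]
    exact hfl
  have hzmem : (fun _ : ℕ => (0:ℤ)) ∈ negShift (fun i => d (i + 1)) dstar := by
    have : (fun _ : ℕ => (0:ℤ)) = dig β 0 := by
      funext i
      rw [hzero i]
    rw [this]
    apply hB
    · have h0 : (0:ℝ) ≤ β / (β + 1) := div_nonneg hb0.le hb1.le
      rw [hl, neg_div]
      linarith
    · linarith
  have hw : (List.replicate (2 * n - 1) (0:ℤ)) ∈ lang (negShift (fun i => d (i + 1)) dstar) := by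
    refine ⟨fun _ => 0, hzmem, 0, ?_⟩
    apply List.ext_getElem (by simp)
    intro i h1 h2
    simp
  obtain ⟨u, hu⟩ := htrans _ hv _ hw
  rw [List.append_assoc] at hu
  have hsuffix : ∀ (a b : List ℤ) (S : Set (ℕ → ℤ)), a ++ b ∈ lang S → b ∈ lang S := by
    intro a b S h
    obtain ⟨y, hy, k, he⟩ := h
    refine ⟨y, hy, k + a.length, ?_⟩
    apply List.ext_getElem (by simp)
    intro i h1 h2
    have h3 : (a ++ b)[a.length + i]'(by simp; omega) = y (k + (a.length + i)) := by
      have h4 := List.getElem_of_eq he (show a.length + i < (a ++ b).length by simp; omega)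
      simpa using h4
    rw [List.getElem_append_right (by omega)] at h3
    simp only [List.getElem_map, List.getElem_range]
    simp only [Nat.add_sub_cancel_left] at h3
    rw [h3, Nat.add_assoc]
  have hx2 : u ++ List.replicate (2 * n - 1) (0:ℤ) ∈ lang (negShift (fun i => d (i + 1)) dstar) :=
    hsuffix _ _ _ hu
  have heq := main (u ++ List.replicate (2 * n - 1) (0:ℤ)) hx2 hu
  have hd1pos : 1 ≤ d 1 := by
    have h1 := hdig 0
    norm_num at h1
    rw [h1]
    unfold dig
    simp only [Function.iterate_zero_apply]
    have harg : -β * l + β / (β + 1) = β := by rw [hl]; field_simp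
    rw [harg]
    exact Int.le_floor.2 (by exact_mod_cast hβ.le)
  have hd1per : ∀ q, d (1 + (2 * n - 1) * q) = d 1 := by
    intro q
    induction q with
    | zero => norm_num
    | succ q IH =>
      have e : 1 + (2 * n - 1) * (q + 1) = (1 + (2 * n - 1) * q) + (2 * n - 1) := by ring
      rw [e, hper _ (by omega), IH]
  obtain ⟨A, B, hAB, hB⟩ : ∃ A B, (2 * n - 1) * A + B = u.length + (2 * n - 1) - 1 ∧ B < 2 * n - 1 :=
    ⟨(u.length + (2 * n - 1) - 1) / (2 * n - 1), (u.length + (2 * n - 1) - 1) % (2 * n - 1),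
      Nat.div_add_mod _ _, Nat.mod_lt _ (by omega)⟩
  have hidx1 : u.length ≤ (2 * n - 1) * A := by omega
  have hidx2 : (2 * n - 1) * A < u.length + (2 * n - 1) := by omega
  have hentry : (u ++ List.replicate (2 * n - 1) (0:ℤ))[(2 * n - 1) * A]'(by simp; omega) = 0 := by
    rw [List.getElem_append_right (by omega)]
    simp
  have h5 := List.getElem_of_eq heq (show (2 * n - 1) * A
      < (u ++ List.replicate (2 * n - 1) (0:ℤ)).length by simp; omega)
  rw [hentry] at h5
  simp only [List.getElem_ofFn] at h5
  have hfin : d ((2 * n - 1) * A + 1) = 0 := h5.symm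
  have e1 : (2 * n - 1) * A + 1 = 1 + (2 * n - 1) * A := by omega
  rw [e1, hd1per A] at hfin
  omega
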